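/- arXiv:2601.09958 — 3 statements merged into one kernel-verified Lean document; each statement's English description precedes it below -/
import Mathlib

section
/- Let G be a connected, locally finite simple graph on a vertex type V, and let ξ ⊆ V be an infinite set whose induced subgraph in G is connected. Then there exist an end e of G and a function U assigning to every finite set K ⊆ V a set U(K) ⊆ V such that for every finite K ⊆ V: (i) U(K) is contained both in the vertex set of the component e(K) and in ξ; (ii) U(K) is infinite; (iii) the subgraph of G induced on U(K) is connected; and (iv) U(K) ⊆ U(K₀) whenever K₀ ⊆ K. -/
/-!
The subgraph induced on `ξ` is infinite, connected and locally finite, so it has an end `ε`.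
For finite `K ⊆ V`, take `U K` to be the component `ε (K ∩ ξ)`, viewed as a subset of `V`: it is
infinite, connected, disjoint from `K` and shrinks as `K` grows. A connected set disjoint from `K`
lies in a single component of `G - K`, so the components of `G - K` containing the sets `U K`
form an end of `G`.
-/

open Opposite

namespace SimpleGraph

variable {V W : Type*} {G : SimpleGraph V}

lemma Connected.induce_image {G' : SimpleGraph W} (f : G →g G') {s : Set V}
    (h : (G.induce s).Connected) : (G'.induce (f '' s)).Connected :=
  h.map (induceHom f (Set.mapsTo_image f s))
    ((Set.mapsTo_image f s).restrict_surjective_iff.mpr (Set.surjOn_image f s))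

noncomputable abbrev LocallyFinite.induce (hG : G.LocallyFinite) (s : Set V) :
    (G.induce s).LocallyFinite := fun v =>
  have := hG v
  ((G.neighborSet v).toFinite.preimage Subtype.val_injective.injOn).fintype

namespace ComponentCompl

variable {K : Set V}

lemma supp_eq_image_supp (C : G.ComponentCompl K) :
    C.supp = Subtype.val '' ConnectedComponent.supp C := by
  ext v
  constructor
  · rintro ⟨hv, rfl⟩
    exact ⟨⟨v, hv⟩, rfl, rfl⟩
  · rintro ⟨⟨v, hv⟩, rfl, rfl⟩
    exact ⟨hv, rfl⟩

lemma connected_induce_supp (C : G.ComponentCompl K) : (G.induce C.supp).Connected := by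
  rw [supp_eq_image_supp]
  exact (ConnectedComponent.connected_toSimpleGraph C).induce_image (Embedding.induce _).toHom

lemma subset_supp_of_preconnected {S : Set V} (hS : (G.induce S).Preconnected)
    (hSK : Disjoint S K) (C : G.ComponentCompl K) {v : V} (hv : v ∈ S) (hvC : v ∈ C) :
    S ⊆ C.supp := by
  intro w hw
  obtain ⟨_, rfl⟩ := hvC
  have hSK' : S ⊆ Kᶜ := hSK.subset_compl_right
  refine ⟨hSK' hw, ConnectedComponent.sound ?_⟩
  exact ((hS ⟨w, hw⟩ ⟨v, hv⟩).map (induceHomOfLE G hSK').toHom)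

end ComponentCompl

lemma exists_end_of_antitone (U : Finset V → Set V) (hne : ∀ K, (U K).Nonempty)
    (hdisj : ∀ K, Disjoint (U K) K) (hpre : ∀ K, (G.induce (U K)).Preconnected)
    (hU : Antitone U) : ∃ e : G.end, ∀ K, U K ⊆ (e.val (op K)).supp := by
  choose v hv using hne
  have hvK K : v K ∉ K := (hdisj K).notMem_of_mem_left (hv K)
  have hsub K : U K ⊆ (G.componentComplMk (hvK K)).supp :=
    ComponentCompl.subset_supp_of_preconnected (hpre K) (hdisj K) _ (hv K)
      (G.componentComplMk_mem _)
  refine ⟨⟨fun K => G.componentComplMk (hvK K.unop), fun {K L} f => ?_⟩, fun K => hsub K⟩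
  obtain ⟨_, hmk⟩ := hsub L.unop (hU (CategoryTheory.le_of_op_hom f) (hv K.unop))
  exact hmk

lemma end_supp_antitone (e : G.end) {K L : Finset V} (h : K ⊆ L) :
    (e.val (op L)).supp ⊆ (e.val (op K)).supp := by
  rw [← e.prop (CategoryTheory.opHomOfLE h)]
  exact ComponentCompl.subset_hom _ (Finset.coe_subset.mpr h)

/- `SimpleGraph.end_componentCompl_infinite` and `SimpleGraph.nonempty_ends_of_infinite` are only
stated for `V : Type`; these two are their universe-polymorphic versions. -/
lemma end_componentCompl_supp_infinite (e : G.end) (K : (Finset V)ᵒᵖ) :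
    (e.val K).supp.Infinite :=
  (e.val K).infinite_iff_in_all_ranges.mpr fun L h =>
    ⟨e.val (op L), e.prop (CategoryTheory.opHomOfLE h)⟩

lemma end_nonempty_of_infinite [G.LocallyFinite] [Fact G.Preconnected] [Infinite V] :
    Nonempty G.end :=
  have (K : (Finset V)ᵒᵖ) : Finite (G.componentComplFunctor.obj K) :=
    G.componentCompl_finite K.unop
  have (K : (Finset V)ᵒᵖ) : Nonempty (G.componentComplFunctor.obj K) :=
    G.componentCompl_nonempty_of_infinite K.unop
  (nonempty_sections_of_finite_inverse_system G.componentComplFunctor).to_subtype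

section endTrace

variable {s : Set V}

def endTrace (ε : (G.induce s).end) (K : Finset V) : Set V :=
  Subtype.val '' (ε.val (op (K.preimage ((↑) : s → V) Subtype.val_injective.injOn))).supp

variable (ε : (G.induce s).end)

lemma endTrace_subset (K : Finset V) : endTrace ε K ⊆ s := by
  rintro _ ⟨w, -, rfl⟩
  exact w.2

lemma disjoint_endTrace (K : Finset V) : Disjoint (endTrace ε K) K := by
  rw [Set.disjoint_left]
  rintro _ ⟨w, ⟨hwK, -⟩, rfl⟩ hw
  exact hwK (by simpa using hw)

lemma endTrace_infinite (K : Finset V) : (endTrace ε K).Infinite :=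
  (end_componentCompl_supp_infinite ε _).image Subtype.val_injective.injOn

lemma connected_induce_endTrace (K : Finset V) : (G.induce (endTrace ε K)).Connected :=
  (ComponentCompl.connected_induce_supp _).induce_image (Embedding.induce s).toHom

lemma endTrace_antitone : Antitone (endTrace ε) := fun _ _ h =>
  Set.image_mono (end_supp_antitone ε (Finset.monotone_preimage Subtype.val_injective h))

end endTrace

end SimpleGraph

open SimpleGraph

theorem stmt_2_general {V : Type*} (G : SimpleGraph V)
    (hlf : G.LocallyFinite) (ξ : Set V) (hξ : ξ.Infinite)
    (hξconn : (G.induce ξ).Connected) :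
    ∃ (e : G.end) (U : Finset V → Set V),
      ∀ K : Finset V,
        U K ⊆ (e.val (op K)).supp ∧
        U K ⊆ ξ ∧
        (U K).Infinite ∧
        (G.induce (U K)).Connected ∧
        ∀ K₀ : Finset V, K₀ ⊆ K → U K ⊆ U K₀ := by
  have := hlf.induce ξ
  have : Fact (G.induce ξ).Preconnected := ⟨hξconn.preconnected⟩
  have := hξ.to_subtype
  obtain ⟨ε⟩ := end_nonempty_of_infinite (G := G.induce ξ)
  obtain ⟨e, he⟩ := exists_end_of_antitone (endTrace ε) (fun K => (endTrace_infinite ε K).nonempty)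
    (disjoint_endTrace ε) (fun K => (connected_induce_endTrace ε K).preconnected)
    (endTrace_antitone ε)
  exact ⟨e, endTrace ε, fun K => ⟨he K, endTrace_subset ε K, endTrace_infinite ε K,
    connected_induce_endTrace ε K, fun K₀ h => endTrace_antitone ε h⟩⟩

/-- **An infinite connected subgraph determines an end with nested infinite pieces.**
Let `G` be a connected, locally finite simple graph on `V` and let `ξ ⊆ V` be an
infinite set inducing a connected subgraph.  Then there are an end `e` of `G` and an
assignment `U` of a set `U K ⊆ V` to each finite `K ⊆ V` such that for all finite `K`:
`U K` is contained in the component `e K` of the complement of `K` and in `ξ`, `U K`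
is infinite, `U K` induces a connected subgraph of `G`, and `U K ⊆ U K₀` whenever
`K₀ ⊆ K`. -/
theorem stmt_2 {V : Type*} (G : SimpleGraph V) (hconn : G.Connected)
    (hlf : G.LocallyFinite) (ξ : Set V) (hξ : ξ.Infinite)
    (hξconn : (G.induce ξ).Connected) :
    ∃ (e : G.end) (U : Finset V → Set V),
      ∀ K : Finset V,
        U K ⊆ (e.val (op K)).supp ∧
        U K ⊆ ξ ∧
        (U K).Infinite ∧
        (G.induce (U K)).Connected ∧
        ∀ K₀ : Finset V, K₀ ⊆ K → U K ⊆ U K₀ :=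
  stmt_2_general G hlf ξ hξ hξconn
end

section
/- Let G be a connected, locally finite simple graph on a vertex type V, let C ⊆ V be an infinite set whose induced subgraph in G is connected, and let e be an end of G such that for every finite K ⊆ V the intersection of the vertex set of the component e(K) with C is infinite. Then for every v ∈ C there exists an injective sequence r : ℕ → V with r 0 = v such that every r n lies in C, r n and r (n+1) are adjacent in G for every n, and for every finite K ⊆ V all but finitely many of the r n lie in the vertex set of e(K) (i.e. the ray r converges to the end e). -/
open Opposite Filter

namespace RayAux

variable {V : Type*} {G : SimpleGraph V}

/-- Connectivity within a set `A`: a walk whose support lies in `A`. -/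
def Conn (G : SimpleGraph V) (A : Set V) (x y : V) : Prop :=
  ∃ w : G.Walk x y, ∀ z ∈ w.support, z ∈ A

lemma Conn.refl {A : Set V} {x : V} (hx : x ∈ A) : Conn G A x x :=
  ⟨SimpleGraph.Walk.nil, by simpa using hx⟩

lemma Conn.symm {A : Set V} {x y : V} (h : Conn G A x y) : Conn G A y x := by
  obtain ⟨w, hw⟩ := h
  exact ⟨w.reverse, by simpa using hw⟩

lemma Conn.trans {A : Set V} {x y z : V} (h : Conn G A x y) (h' : Conn G A y z) :
    Conn G A x z := by
  obtain ⟨w, hw⟩ := h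
  obtain ⟨w', hw'⟩ := h'
  refine ⟨w.append w', fun u hu => ?_⟩
  rcases (SimpleGraph.Walk.mem_support_append_iff _ _).1 hu with hu | hu
  · exact hw u hu
  · exact hw' u hu

lemma Conn.mem_right {A : Set V} {x y : V} (h : Conn G A x y) : y ∈ A := by
  obtain ⟨w, hw⟩ := h
  exact hw y w.end_mem_support

lemma Conn.mem_left {A : Set V} {x y : V} (h : Conn G A x y) : x ∈ A := by
  obtain ⟨w, hw⟩ := h
  exact hw x w.start_mem_support

lemma Conn.mono {A B : Set V} (hAB : A ⊆ B) {x y : V} (h : Conn G A x y) : Conn G B x y := by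
  obtain ⟨w, hw⟩ := h
  exact ⟨w, fun z hz => hAB (hw z hz)⟩

/-- A walk staying in the complement of `K` keeps us in the same `ComponentCompl`. -/
lemma mem_supp_of_walk {K : Set V} {c : G.ComponentCompl K} {x y : V}
    (hx : x ∈ c) (w : G.Walk x y) (hw : ∀ z ∈ w.support, z ∉ K) : y ∈ c := by
  induction w with
  | nil => exact hx
  | @cons a b d h p ih =>
    refine ih (SimpleGraph.ComponentCompl.mem_of_adj a b hx ?_ h) ?_
    · exact hw b (by simp)
    · exact fun z hz => hw z (by simp [hz])

lemma end_supp_mono (e : G.end) {K L : Finset V} (h : K ⊆ L) :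
    ((e.val (op L)).supp : Set V) ⊆ (e.val (op K)).supp := by
  have h2 := e.2 (CategoryTheory.homOfLE h).op
  rw [← h2]
  exact SimpleGraph.ComponentCompl.subset_hom (e.val (op L)) (Finset.coe_subset.mpr h)

/-- Reachability in the induced graph gives `Conn`. -/
lemma conn_of_induce_walk {A : Set V} {a b : A} (p : (G.induce A).Walk a b) :
    Conn G A a b := by
  induction p with
  | @nil u => exact Conn.refl u.2
  | @cons u x y h p ih =>
    have hadj : G.Adj u x := h
    obtain ⟨w, hw⟩ := ih
    refine ⟨SimpleGraph.Walk.cons hadj w, fun t ht => ?_⟩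
    rcases (by simpa using ht : t = ↑u ∨ t ∈ w.support) with rfl | ht
    · exact u.2
    · exact hw t ht

/-- The first-exit ("gateway") lemma: a walk in `A` from `x ∉ F` to `f ∈ F` yields a vertex `g`
connected to `x` within `A \ F` and adjacent to a vertex of `F`. -/
lemma exists_gateway {A F : Set V} {x f : V} (w : G.Walk x f) :
    x ∉ F → f ∈ F → (∀ z ∈ w.support, z ∈ A) →
    ∃ g f', Conn G (A \ F) x g ∧ f' ∈ F ∧ G.Adj g f' := by
  induction w with
  | nil => intro hx hf _; exact absurd hf hx
  | @cons a b c h p ih =>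
    intro hx hf hw
    by_cases hb : b ∈ F
    · exact ⟨a, b, Conn.refl ⟨hw a (by simp), hx⟩, hb, h⟩
    · obtain ⟨g, f', hc, hf', hadj⟩ := ih hb hf (fun z hz => hw z (by simp [hz]))
      refine ⟨g, f', ?_, hf', hadj⟩
      obtain ⟨q, hq⟩ := hc
      refine ⟨SimpleGraph.Walk.cons h q, fun t ht => ?_⟩
      rcases (by simpa using ht : t = a ∨ t ∈ q.support) with rfl | ht
      · exact ⟨hw _ (by simp), hx⟩
      · exact hq t ht

/-- The first-entry ("trim") lemma. -/
lemma exists_trim {D' : Set V} {x y : V} (w : G.Walk x y) :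
    w.IsPath → x ∉ D' → y ∈ D' →
    ∃ (z : V) (q : G.Walk x z), q.IsPath ∧ (∀ u ∈ q.support, u ∈ w.support) ∧ z ∈ D' ∧
      ∀ u ∈ q.support, u ∈ D' → u = z := by
  induction w with
  | nil => intro _ hx hy; exact absurd hy hx
  | @cons a b c h p ih =>
    intro hp hx hy
    by_cases hb : b ∈ D'
    · refine ⟨b, SimpleGraph.Walk.cons h SimpleGraph.Walk.nil, ?_, ?_, hb, ?_⟩
      · rw [SimpleGraph.Walk.isPath_def]
        simpa using h.ne
      · intro u hu
        rcases (by simpa using hu : u = a ∨ u = b) with rfl | rfl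
        · simp
        · simp [SimpleGraph.Walk.start_mem_support]
      · intro u hu huD
        rcases (by simpa using hu : u = a ∨ u = b) with rfl | rfl
        · exact absurd huD hx
        · rfl
    · obtain ⟨z, q, hq, hsub, hz, hlast⟩ :=
        ih ((SimpleGraph.Walk.cons_isPath_iff h p).1 hp).1 hb hy
      refine ⟨z, SimpleGraph.Walk.cons h q, ?_, ?_, hz, ?_⟩
      · rw [SimpleGraph.Walk.cons_isPath_iff]
        refine ⟨hq, fun ha => ?_⟩
        exact ((SimpleGraph.Walk.cons_isPath_iff h p).1 hp).2 (hsub a ha)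
      · intro u hu
        rcases (by simpa using hu : u = a ∨ u ∈ q.support) with rfl | hu
        · simp
        · simp [hsub u hu]
      · intro u hu huD
        rcases (by simpa using hu : u = a ∨ u ∈ q.support) with rfl | hu
        · exact absurd huD hx
        · exact hlast u hu huD

lemma getVert_mem_support {u v : V} (w : G.Walk u v) (n : ℕ) : w.getVert n ∈ w.support := by
  rcases le_or_gt n w.length with h | h
  · exact (SimpleGraph.Walk.mem_support_iff_exists_getVert).2 ⟨n, rfl, h⟩
  · rw [w.getVert_of_length_le h.le]
    exact w.end_mem_support

lemma getVert_inj {u v : V} (p : G.Walk u v) (hp : p.IsPath) :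
    ∀ i j, i ≤ p.length → j ≤ p.length → p.getVert i = p.getVert j → i = j := by
  induction p with
  | nil =>
    intro i j hi hj _
    simp only [SimpleGraph.Walk.length_nil, Nat.le_zero] at hi hj
    omega
  | @cons a b c h p ih =>
    intro i j hi hj hij
    have hp' := (SimpleGraph.Walk.cons_isPath_iff h p).1 hp
    match i, j with
    | 0, 0 => rfl
    | 0, j + 1 =>
      exfalso
      have : (SimpleGraph.Walk.cons h p).getVert (j+1) = p.getVert j := rfl
      rw [this] at hij
      rw [SimpleGraph.Walk.getVert_zero] at hij
      exact hp'.2 (hij ▸ getVert_mem_support p j)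
    | i + 1, 0 =>
      exfalso
      have : (SimpleGraph.Walk.cons h p).getVert (i+1) = p.getVert i := rfl
      rw [this] at hij
      rw [SimpleGraph.Walk.getVert_zero] at hij
      exact hp'.2 (hij ▸ getVert_mem_support p i)
    | i + 1, j + 1 =>
      have : p.getVert i = p.getVert j := hij
      have := ih hp'.1 i j (by simpa using hi) (by simpa using hj) this
      omega

/-- Countability of the vertex set of a connected locally finite graph. -/
lemma countable_of_connected (hconn : G.Connected) (hlf : G.LocallyFinite) :
    Countable V := by
  obtain ⟨v⟩ := hconn.nonempty
  let B : ℕ → Set V := fun n => {u | ∃ w : G.Walk u v, w.length ≤ n}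
  have hBfin : ∀ n, (B n).Finite := by
    intro n
    induction n with
    | zero =>
      refine Set.Finite.subset (Set.finite_singleton v) ?_
      rintro u ⟨w, hw⟩
      have := SimpleGraph.Walk.eq_of_length_eq_zero (Nat.le_zero.1 hw)
      simp [this]
    | succ n ihn =>
      refine Set.Finite.subset (ihn.union (Set.Finite.biUnion ihn
        (fun x _ => (G.neighborSet x).toFinite))) ?_
      rintro u ⟨w, hw⟩
      cases w with
      | nil => exact Or.inl ⟨SimpleGraph.Walk.nil, by simp⟩
      | @cons a b c h p =>
        right
        refine Set.mem_biUnion (x := b) ⟨p, ?_⟩ h.symm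
        simpa using Nat.succ_le_succ_iff.1 hw
  have huniv : (Set.univ : Set V).Countable := by
    refine Set.Countable.mono (fun u _ => ?_) (Set.countable_iUnion (fun n => (hBfin n).countable))
    obtain ⟨w⟩ := hconn.preconnected u v
    exact Set.mem_iUnion.2 ⟨w.length, w, le_rfl⟩
  exact Set.countable_univ_iff.1 huniv

/-- The key step: removing a finite set from a `Conn`-connected set `D` all of whose
component-intersections with the end are infinite, we can find a connected subset of
`D \ F` with the same property. -/
lemma step (e : G.end) (hlf : G.LocallyFinite) {D : Set V}
    (hDconn : ∀ x ∈ D, ∀ y ∈ D, Conn G D x y)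
    (hgood : ∀ L : Finset V, (D ∩ (e.val (op L)).supp).Infinite)
    (F : Finset V) :
    ∃ D' : Set V, D' ⊆ D \ ↑F ∧ (∀ x ∈ D', ∀ y ∈ D', Conn G D' x y) ∧
      ∀ L : Finset V, (D' ∩ (e.val (op L)).supp).Infinite := by
  classical
  by_cases hFD : ∃ f, f ∈ (↑F : Set V) ∩ D
  swap
  · refine ⟨D, fun u hu => ⟨hu, fun hF => hFD ⟨u, hF, hu⟩⟩, hDconn, hgood⟩
  obtain ⟨f₀, hf₀F, hf₀D⟩ := hFD
  set E : Set V := D \ ↑F with hE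
  -- components of E
  let Comp : V → Set V := fun t => {y | Conn G E t y}
  have hCompsub : ∀ t, Comp t ⊆ E := fun t y hy => hy.mem_right
  have hCompconn : ∀ t, ∀ y ∈ Comp t, ∀ z ∈ Comp t, Conn G (Comp t) y z := by
    intro t y hy z hz
    obtain ⟨w, hw⟩ := (Conn.symm hy).trans hz
    refine ⟨w, fun u hu => ?_⟩
    have : Conn G E y u := by
      refine ⟨w.takeUntil u hu, fun a ha => hw a (w.support_takeUntil_subset hu ha)⟩
    exact hy.trans this
  -- gateways
  have hgate : ∀ u ∈ E, ∃ g, g ∈ Comp u ∧ ∃ f' ∈ (↑F : Set V), G.Adj g f' := by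
    intro u hu
    obtain ⟨w, hw⟩ := hDconn u hu.1 f₀ hf₀D
    obtain ⟨g, f', hc, hf', hadj⟩ := exists_gateway w hu.2 hf₀F hw
    exact ⟨g, hc, f', hf', hadj⟩
  -- the finite family of components
  let N : Set V := ⋃ f ∈ (↑F : Set V), G.neighborSet f
  have hNfin : N.Finite := Set.Finite.biUnion F.finite_toSet (fun f _ => (G.neighborSet f).toFinite)
  let 𝒞 : Set (Set V) := Comp '' (N ∩ E)
  have h𝒞fin : 𝒞.Finite := (hNfin.inter_of_left E).image Comp
  have hcover : ∀ u ∈ E, ∃ c ∈ 𝒞, u ∈ c := by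
    intro u hu
    obtain ⟨g, hg, f', hf', hadj⟩ := hgate u hu
    refine ⟨Comp g, ⟨g, ⟨?_, hCompsub u hg⟩, rfl⟩, Conn.symm hg⟩
    exact Set.mem_biUnion hf' hadj.symm
  -- one of the components is good
  have hone : ∃ c ∈ 𝒞, ∀ L : Finset V, (c ∩ (e.val (op L)).supp).Infinite := by
    by_contra hbad
    push_neg at hbad
    simp only [Set.not_infinite] at hbad
    choose! Lc hLc using hbad
    let Lstar : Finset V := F ∪ h𝒞fin.toFinset.sup Lc
    have hLsub : ∀ c ∈ 𝒞, Lc c ⊆ Lstar := by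
      intro c hc
      exact Finset.Subset.trans (Finset.le_sup (h𝒞fin.mem_toFinset.2 hc)) Finset.subset_union_right
    have hsubset : (D ∩ (e.val (op Lstar)).supp) ⊆
        ⋃ c ∈ 𝒞, (c ∩ (e.val (op (Lc c))).supp) := by
      rintro u ⟨huD, husupp⟩
      have huK : u ∉ (↑Lstar : Set V) := SimpleGraph.ComponentCompl.notMem_of_mem husupp
      have huE : u ∈ E := ⟨huD, fun hF => huK (by exact_mod_cast Finset.mem_union_left _ hF)⟩
      obtain ⟨c, hc, huc⟩ := hcover u huE
      refine Set.mem_biUnion hc ⟨huc, ?_⟩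
      exact end_supp_mono e (hLsub c hc) husupp
    have hfin : (⋃ c ∈ 𝒞, (c ∩ (e.val (op (Lc c))).supp)).Finite :=
      Set.Finite.biUnion h𝒞fin (fun c hc => hLc c hc)
    exact (hgood Lstar) (hfin.subset hsubset)
  obtain ⟨c, hc𝒞, hcgood⟩ := hone
  obtain ⟨t, -, rfl⟩ := hc𝒞
  exact ⟨Comp t, hCompsub t, hCompconn t, hcgood⟩


/-- Data of a stage of the construction: the walk built so far together with the
connected "target region" `D`. -/
structure Stage {V : Type*} (G : SimpleGraph V) (e : G.end) (C : Set V) (v : V) where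
  x : V
  D : Set V
  w : G.Walk v x
  hpath : w.IsPath
  hxD : x ∈ D
  hDC : D ⊆ C
  hconn : ∀ a ∈ D, ∀ b ∈ D, Conn G D a b
  hgood : ∀ L : Finset V, (D ∩ (e.val (op L)).supp).Infinite
  hsupp : ∀ u ∈ w.support, u ∈ D → u = x
  hwC : ∀ u ∈ w.support, u ∈ C

/-- Relation between consecutive stages. -/
def NextRel {e : G.end} {C : Set V} {v : V} (a : V) (s t : Stage G e C v) : Prop :=
  t.D ⊆ s.D \ {a, s.x} ∧ s.w.length < t.w.length ∧
  (∀ i ≤ s.w.length, t.w.getVert i = s.w.getVert i) ∧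
  (∀ i, s.w.length ≤ i → t.w.getVert i ∈ s.D)

lemma exists_next (hlf : G.LocallyFinite) {e : G.end} {C : Set V} {v : V}
    (s : Stage G e C v) (a : V) : ∃ t : Stage G e C v, NextRel a s t := by
  classical
  obtain ⟨D', hD'sub, hD'conn, hD'good⟩ := step e hlf s.hconn s.hgood ({a, s.x} : Finset V)
  have hsub : D' ⊆ s.D \ ({a, s.x} : Set V) := by
    intro u hu
    obtain ⟨h1, h2⟩ := hD'sub hu
    exact ⟨h1, by simpa using h2⟩
  have hxnot : s.x ∉ D' := fun hh => (hsub hh).2 (by simp)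
  obtain ⟨y, hyD', -⟩ := (hD'good ∅).nonempty
  obtain ⟨w0, hw0⟩ := s.hconn s.x s.hxD y (hsub hyD').1
  have hp : w0.bypass.IsPath := w0.bypass_isPath
  have hpsub : ∀ u ∈ w0.bypass.support, u ∈ s.D :=
    fun u hu => hw0 u (w0.support_bypass_subset hu)
  obtain ⟨z, q, hq, hqsub, hzD', hqlast⟩ := exists_trim w0.bypass hp hxnot hyD'
  have hqD : ∀ u ∈ q.support, u ∈ s.D := fun u hu => hpsub u (hqsub u hu)
  have hq0 : 0 < q.length := by
    rcases Nat.eq_zero_or_pos q.length with h0 | h0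
    · exact absurd (SimpleGraph.Walk.eq_of_length_eq_zero h0 ▸ hzD') hxnot
    · exact h0
  have hqnodup := (SimpleGraph.Walk.isPath_def q).1 hq
  have hxtail : s.x ∉ q.support.tail := by
    have h1 := hqnodup
    rw [q.support_eq_cons] at h1
    exact (List.nodup_cons.1 h1).1
  refine ⟨⟨z, D', s.w.append q, ?_, hzD', fun u hu => s.hDC (hsub hu).1, hD'conn, hD'good,
    ?_, ?_⟩, hsub, ?_, ?_, ?_⟩
  · -- path
    rw [SimpleGraph.Walk.isPath_def, SimpleGraph.Walk.support_append]
    refine List.Nodup.append ((SimpleGraph.Walk.isPath_def s.w).1 s.hpath) ?_ ?_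
    · have h1 := hqnodup
      rw [q.support_eq_cons] at h1
      exact (List.nodup_cons.1 h1).2
    · intro u hu1 hu2
      have hu3 : u ∈ q.support := by
        rw [q.support_eq_cons]
        exact List.mem_cons_of_mem _ hu2
      have : u = s.x := s.hsupp u hu1 (hqD u hu3)
      exact hxtail (this ▸ hu2)
  · -- hsupp
    intro u hu huD'
    rcases (SimpleGraph.Walk.mem_support_append_iff _ _).1 hu with hmem | hmem
    · have h1 : u = s.x := s.hsupp u hmem (hsub huD').1
      exact absurd (h1 ▸ huD') hxnot
    · exact hqlast u hmem huD'
  · -- hwC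
    intro u hu
    rcases (SimpleGraph.Walk.mem_support_append_iff _ _).1 hu with hmem | hmem
    · exact s.hwC u hmem
    · exact s.hDC (hqD u hmem)
  · -- length
    rw [SimpleGraph.Walk.length_append]
    omega
  · -- getVert agreement
    intro i hi
    rw [SimpleGraph.Walk.getVert_append]
    split_ifs with h
    · rfl
    · have h1 : i = s.w.length := by omega
      subst h1
      simp [SimpleGraph.Walk.getVert_zero, SimpleGraph.Walk.getVert_length]
  · -- tail membership
    intro i hi
    rw [SimpleGraph.Walk.getVert_append, if_neg (by omega)]
    exact hqD _ (getVert_mem_support q _)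

/-- The sequence of stages. -/
noncomputable def stages (hlf : G.LocallyFinite) {e : G.end} {C : Set V} {v : V}
    (base : Stage G e C v) (sE : ℕ → V) : ℕ → Stage G e C v
  | 0 => base
  | n + 1 => (exists_next hlf (stages hlf base sE n) (sE n)).choose

lemma stages_spec (hlf : G.LocallyFinite) {e : G.end} {C : Set V} {v : V}
    (base : Stage G e C v) (sE : ℕ → V) (n : ℕ) :
    NextRel (sE n) (stages hlf base sE n) (stages hlf base sE (n + 1)) :=
  (exists_next hlf (stages hlf base sE n) (sE n)).choose_spec

end RayAux

open RayAux

/-- **Existence of a ray in `C` converging to the end `e`.**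
Let `G` be a connected, locally finite simple graph on `V`, let `C ⊆ V` be an infinite
set inducing a connected subgraph, and let `e` be an end of `G` such that the vertex
set of the component `e K` meets `C` in an infinite set for every finite `K ⊆ V`.
Then from every `v ∈ C` there is a ray (an injective sequence of successively adjacent
vertices) starting at `v`, staying in `C`, and converging to `e`: for every finite
`K ⊆ V`, all but finitely many vertices of the ray lie in the component `e K`. -/
theorem stmt_3 {V : Type*} (G : SimpleGraph V) (hconn : G.Connected)
    (hlf : G.LocallyFinite) (C : Set V) (hC : C.Infinite)
    (hCconn : (G.induce C).Connected) (e : G.end)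
    (he : ∀ K : Finset V, ((e.val (op K)).supp ∩ C).Infinite) :
    ∀ v ∈ C, ∃ r : ℕ → V,
      Function.Injective r ∧
      r 0 = v ∧
      (∀ n, r n ∈ C) ∧
      (∀ n, G.Adj (r n) (r (n + 1))) ∧
      (∀ K : Finset V, ∀ᶠ n in atTop, r n ∈ (e.val (op K)).supp) := by
  classical
  intro v hv
  haveI : Countable V := countable_of_connected hconn hlf
  haveI : Nonempty V := ⟨v⟩
  obtain ⟨sE, hsE⟩ := exists_surjective_nat V
  let base : Stage G e C v :=
    { x := v
      D := C
      w := SimpleGraph.Walk.nil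
      hpath := SimpleGraph.Walk.IsPath.nil
      hxD := hv
      hDC := subset_rfl
      hconn := fun a ha b hb =>
        conn_of_induce_walk ((hCconn.preconnected ⟨a, ha⟩ ⟨b, hb⟩).some)
      hgood := fun L => by rw [Set.inter_comm]; exact he L
      hsupp := by intro u hu _; simpa using hu
      hwC := by
        intro u hu
        have h1 : u = v := by simpa using hu
        exact h1 ▸ hv }
  set f := stages hlf base sE with hfdef
  have hf : ∀ n, NextRel (sE n) (f n) (f (n + 1)) := fun n => stages_spec hlf base sE n
  have hlen : ∀ n, n ≤ (f n).w.length := by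
    intro n
    induction n with
    | zero => exact Nat.zero_le _
    | succ n ih =>
      have := (hf n).2.1
      omega
  have hlenmono : ∀ n m, n ≤ m → (f n).w.length ≤ (f m).w.length := by
    intro n m h
    induction h with
    | refl => exact le_rfl
    | step h' ih => exact ih.trans (hf _).2.1.le
  have hmonoD : ∀ n m, n ≤ m → (f m).D ⊆ (f n).D := by
    intro n m h
    induction h with
    | refl => exact subset_rfl
    | @step k h' ih => exact fun u hu => ih (((hf k).1 hu).1)
  have hstable : ∀ n m, n ≤ m → ∀ k, k ≤ (f n).w.length →
      (f m).w.getVert k = (f n).w.getVert k := by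
    intro n m h
    induction h with
    | refl => intro k _; rfl
    | @step m' h' ih =>
      intro k hk
      rw [(hf m').2.2.1 k (hk.trans (hlenmono n m' h'))]
      exact ih k hk
  have hsnot : ∀ n m, n < m → sE n ∉ (f m).D := by
    intro n m h hu
    have h1 : (f m).D ⊆ (f (n + 1)).D := hmonoD (n + 1) m h
    have h2 := ((hf n).1 (h1 hu)).2
    simp at h2
  have htail : ∀ N m, N ≤ m → ∀ k, (f N).w.length ≤ k → (f m).w.getVert k ∈ (f N).D := by
    intro N m h
    induction h with
    | refl =>
      intro k hk
      rw [SimpleGraph.Walk.getVert_of_length_le _ hk]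
      exact (f N).hxD
    | @step m' h' ih =>
      intro k hk
      rcases le_or_gt k (f m').w.length with hle | hlt
      · rw [(hf m').2.2.1 k hle]
        exact ih k hk
      · exact hmonoD N m' h' ((hf m').2.2.2 k hlt.le)
  refine ⟨fun k => (f k).w.getVert k, ?_, ?_, ?_, ?_, ?_⟩
  · -- injective
    intro i j hij
    rcases lt_trichotomy i j with h | h | h
    · have h1 : (f j).w.getVert i = (f i).w.getVert i := hstable i j h.le i (hlen i)
      have h2 := getVert_inj (f j).w (f j).hpath i j (h.le.trans (hlen j)) (hlen j)
        (by rw [h1]; exact hij)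
      omega
    · exact h
    · have h1 : (f i).w.getVert j = (f j).w.getVert j := hstable j i h.le j (hlen j)
      have h2 := getVert_inj (f i).w (f i).hpath i j (hlen i) (h.le.trans (hlen i))
        (by rw [h1]; exact hij)
      omega
  · exact SimpleGraph.Walk.getVert_zero _
  · exact fun n => (f n).hwC _ (getVert_mem_support _ n)
  · intro n
    have h1 : (f (n + 1)).w.getVert n = (f n).w.getVert n :=
      hstable n (n + 1) (Nat.le_succ n) n (hlen n)
    show G.Adj ((f n).w.getVert n) ((f (n + 1)).w.getVert (n + 1))
    rw [← h1]
    exact SimpleGraph.Walk.adj_getVert_succ _ (lt_of_lt_of_le (Nat.lt_succ_self n) (hlen (n + 1)))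
  · intro K
    have hidx : ∀ u : V, ∃ n, sE n = u := hsE
    set N : ℕ := (K.sup fun u => (hidx u).choose) + 1 with hN
    have hKnot : ∀ u ∈ (f N).D, u ∉ (↑K : Set V) := by
      intro u hu huK
      have h1 : (hidx u).choose < N := Nat.lt_succ_of_le (Finset.le_sup (f := fun u => (hidx u).choose) huK)
      exact hsnot _ N h1 (((hidx u).choose_spec).symm ▸ hu)
    obtain ⟨y, hyD, hysupp⟩ := ((f N).hgood K).nonempty
    have hDsupp : ∀ u ∈ (f N).D, u ∈ (e.val (op K)).supp := by
      intro u hu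
      obtain ⟨wds, hwds⟩ := (f N).hconn y hyD u hu
      exact mem_supp_of_walk hysupp wds (fun t ht => hKnot t (hwds t ht))
    refine eventually_atTop.2 ⟨(f N).w.length, fun k hk => ?_⟩
    exact hDsupp _ (htail N k (le_trans (hlen N) hk) k hk)
end

section
/- Let V be a countable type, let G' be a simple graph on V, and let H be a simple graph on V × Bool such that whenever (x,i) and (y,j) are adjacent in H, either x = y or x is adjacent to y in G'. Fix p ∈ [0,1] and set p⊕ := 1 − (1 − p)² = 2p − p², fix a vertex v ∈ V and a set W ⊆ V. Then the μ_p-probability (Bernoulli(p) site percolation on V × Bool) of the event that (v, false) is joined to some vertex of W × {false, true} by a path in H all of whose vertices are open is at most the μ_{p⊕}-probability (Bernoulli(p⊕) site percolation on V) of the event that v is joined to some vertex of W by a path in G' all of whose vertices are open. -/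
/-!
Declare a vertex `x` of `V` open when at least one of its two copies `(x, false)`, `(x, true)` is
open. Under `μ_p` this OR-projection of the configuration has law `μ_{p⊕}`: the copies are
independent, so `x` is closed with probability `(1 - p)²`. Dropping the `Bool` coordinate maps an
open path of `H` to an open path of `G'` in the projected configuration (steps inside a fibre
collapse), so the `H`-event lies in the preimage of the `G'`-event.
-/

open MeasureTheory
open scoped ENNReal

/-- The Bernoulli measure on `Bool` with parameter `p ≤ 1`:
it assigns mass `p` to `true` and `1 - p` to `false`. -/
noncomputable abbrev bernoulliMeasure (p : ℝ≥0∞) (hp : p ≤ 1) : Measure Bool :=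
  (PMF.ofFintype (fun b => cond b p (1 - p))
    (by simp [Fintype.sum_bool, add_tsub_cancel_of_le hp])).toMeasure

/-- The family of finite-dimensional distributions of the i.i.d. Bernoulli(`p`) field
indexed by `ι`: to each finite set `J ⊆ ι` it assigns the finite product of
Bernoulli(`p`) measures.  A measure `μ` on `ι → Bool` is the infinite product of
Bernoulli(`p`) measures (the Bernoulli(`p`) site-percolation measure `μ_p`) exactly
when it is the projective limit of this family. -/
noncomputable def bernoulliPiFamily (ι : Type*) (p : ℝ≥0∞) (hp : p ≤ 1) :
    ∀ J : Finset ι, Measure (∀ _ : J, Bool) :=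
  fun _J => Measure.pi fun _ => bernoulliMeasure p hp

lemma bernoulliMeasure_singleton {p : ℝ≥0∞} (hp : p ≤ 1) (b : Bool) :
    bernoulliMeasure p hp {b} = cond b p (1 - p) := by
  rw [PMF.toMeasure_apply_singleton _ _ (measurableSet_singleton _), PMF.ofFintype_apply]

lemma MeasureTheory.IsProjectiveLimit.eq_infinitePi_bernoulliMeasure {ι : Type*} {p : ℝ≥0∞} {hp : p ≤ 1}
    {μ : Measure (ι → Bool)} (hμ : IsProjectiveLimit μ (bernoulliPiFamily ι p hp)) :
    μ = Measure.infinitePi fun _ => bernoulliMeasure p hp := by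
  have : ∀ J, IsFiniteMeasure (bernoulliPiFamily ι p hp J) := fun J => by
    unfold bernoulliPiFamily; infer_instance
  exact hμ.unique (Measure.isProjectiveLimit_infinitePi _)

lemma map_or_infinitePi_bernoulliMeasure {p : ℝ≥0∞} (hp : p ≤ 1) :
    (Measure.infinitePi fun _ : Bool => bernoulliMeasure p hp).map (fun x => x false || x true)
      = bernoulliMeasure (1 - (1 - p) ^ 2) tsub_le_self := by
  have hmeas : Measurable fun x : Bool → Bool => x false || x true := by fun_prop
  have hfalse : (fun x : Bool → Bool => x false || x true) ⁻¹' {false}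
      = Set.univ.pi fun _ => {false} := by
    ext x; simp
  have htrue : (fun x : Bool → Bool => x false || x true) ⁻¹' {true}
      = (Set.univ.pi fun _ => {false})ᶜ := by
    ext x; simp [or_iff_not_imp_left]
  have hboth_closed :
      Measure.infinitePi (fun _ : Bool => bernoulliMeasure p hp) (Set.univ.pi fun _ => {false})
        = (1 - p) ^ 2 := by
    rw [Measure.infinitePi_eq_pi, Measure.pi_pi, Fintype.prod_bool, bernoulliMeasure_singleton,
      Bool.cond_false, sq]
  refine Measure.ext_of_singleton fun b => ?_
  rw [Measure.map_apply hmeas (measurableSet_singleton b), bernoulliMeasure_singleton]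
  cases b
  · rw [hfalse, hboth_closed, Bool.cond_false,
      ENNReal.sub_sub_cancel ENNReal.one_ne_top (pow_le_one' tsub_le_self 2)]
  · rw [htrue, prob_compl_eq_one_sub (.univ_pi fun _ => measurableSet_singleton false),
      hboth_closed, Bool.cond_true]

lemma map_or_infinitePi_bernoulliMeasure_prod {ι : Type*} {p : ℝ≥0∞} (hp : p ≤ 1) :
    (Measure.infinitePi fun _ : ι × Bool => bernoulliMeasure p hp).map
        (fun ω x => ω (x, false) || ω (x, true))
      = Measure.infinitePi fun _ : ι => bernoulliMeasure (1 - (1 - p) ^ 2) tsub_le_self := by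
  have hcomp : (fun (ω : ι × Bool → Bool) x => ω (x, false) || ω (x, true))
      = (fun y x => y x false || y x true) ∘ MeasurableEquiv.curry ι Bool Bool := rfl
  rw [hcomp, ← Measure.map_map (by fun_prop) (by fun_prop),
    Measure.infinitePi_map_curry (fun _ _ => bernoulliMeasure p hp),
    Measure.infinitePi_map_pi (f := fun (_ : ι) (y : Bool → Bool) => y false || y true) _
      fun _ => by fun_prop]
  simp only [map_or_infinitePi_bernoulliMeasure]

theorem SimpleGraph.Reachable.induce_map_of_adj {α β : Type*} {G : SimpleGraph α}
    {H : SimpleGraph β} {f : β → α} (hf : ∀ a b, H.Adj a b → f a = f b ∨ G.Adj (f a) (f b))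
    {s : Set β} {t : Set α} (hst : Set.MapsTo f s t) {a b : s}
    (h : (H.induce s).Reachable a b) :
    (G.induce t).Reachable ⟨f a, hst a.2⟩ ⟨f b, hst b.2⟩ := by
  obtain ⟨w⟩ := h
  induction w with
  | nil => rfl
  | @cons u c d hadj _ ih =>
    rcases hf u c (by simpa using hadj) with heq | hadj'
    · exact (Subtype.ext heq : (⟨f u, hst u.2⟩ : t) = ⟨f c, hst c.2⟩) ▸ ih
    · exact (SimpleGraph.Adj.reachable (by simpa using hadj')).trans ih

theorem stmt_6_general {V : Type*} (G' : SimpleGraph V)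
    (H : SimpleGraph (V × Bool))
    (hH : ∀ (x y : V) (i j : Bool), H.Adj (x, i) (y, j) → x = y ∨ G'.Adj x y)
    (p : ℝ≥0∞) (hp : p ≤ 1) (v : V) (W : Set V)
    (μp : Measure ((V × Bool) → Bool))
    (hμp : IsProjectiveLimit μp (bernoulliPiFamily (V × Bool) p hp))
    (μq : Measure (V → Bool))
    (hμq : IsProjectiveLimit μq (bernoulliPiFamily V (1 - (1 - p) ^ 2) tsub_le_self)) :
    μp {ω | ∃ (h₀ : ω (v, false) = true), ∃ y ∈ W, ∃ (j : Bool) (h₁ : ω (y, j) = true),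
          (H.induce {u | ω u = true}).Reachable ⟨(v, false), h₀⟩ ⟨(y, j), h₁⟩}
      ≤ μq {ω | ∃ (h₀ : ω v = true), ∃ y ∈ W, ∃ (h₁ : ω y = true),
          (G'.induce {u | ω u = true}).Reachable ⟨v, h₀⟩ ⟨y, h₁⟩} := by
  set φ : ((V × Bool) → Bool) → V → Bool := fun ω x => ω (x, false) || ω (x, true)
  have hφ : Measurable φ := by fun_prop
  have hmap : μp.map φ = μq := by
    rw [hμp.eq_infinitePi_bernoulliMeasure, hμq.eq_infinitePi_bernoulliMeasure]
    exact map_or_infinitePi_bernoulliMeasure_prod hp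
  have hopen : ∀ ω, Set.MapsTo Prod.fst {u | ω u = true} {x | φ ω x = true} := by
    rintro ω ⟨x, _ | _⟩ hu <;> simp_all [φ]
  rw [← hmap]
  refine (measure_mono ?_).trans (Measure.le_map_apply hφ.aemeasurable _)
  rintro ω ⟨h₀, y, hyW, j, h₁, hr⟩
  exact ⟨hopen ω h₀, y, hyW, hopen ω h₁,
    hr.induce_map_of_adj (fun a b hab => hH a.1 b.1 a.2 b.2 hab) (hopen ω)⟩

/-- **OR-projection domination for percolation connection events.**
Let `V` be countable, `G'` a simple graph on `V`, and `H` a simple graph on `V × Bool`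
such that adjacency `(x,i) ~ (y,j)` in `H` forces `x = y` or `x ~ y` in `G'`.
Fix `p ≤ 1` and set `p⊕ = 1 − (1 − p)²`, a vertex `v ∈ V` and a set `W ⊆ V`.
Then, for Bernoulli(`p`) site percolation `μ_p` on `V × Bool` and Bernoulli(`p⊕`)
site percolation `μ_{p⊕}` on `V`, the `μ_p`-probability that `(v, false)` is joined to
`W × {false, true}` by an open path of `H` is at most the `μ_{p⊕}`-probability that
`v` is joined to `W` by an open path of `G'`. -/
theorem stmt_6 {V : Type*} [Countable V] (G' : SimpleGraph V)
    (H : SimpleGraph (V × Bool))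
    (hH : ∀ (x y : V) (i j : Bool), H.Adj (x, i) (y, j) → x = y ∨ G'.Adj x y)
    (p : ℝ≥0∞) (hp : p ≤ 1) (v : V) (W : Set V)
    (μp : Measure ((V × Bool) → Bool))
    (hμp : IsProjectiveLimit μp (bernoulliPiFamily (V × Bool) p hp))
    (μq : Measure (V → Bool))
    (hμq : IsProjectiveLimit μq (bernoulliPiFamily V (1 - (1 - p) ^ 2) tsub_le_self)) :
    μp {ω | ∃ (h₀ : ω (v, false) = true), ∃ y ∈ W, ∃ (j : Bool) (h₁ : ω (y, j) = true),
          (H.induce {u | ω u = true}).Reachable ⟨(v, false), h₀⟩ ⟨(y, j), h₁⟩}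
      ≤ μq {ω | ∃ (h₀ : ω v = true), ∃ y ∈ W, ∃ (h₁ : ω y = true),
          (G'.induce {u | ω u = true}).Reachable ⟨v, h₀⟩ ⟨y, h₁⟩} :=
  stmt_6_general G' H hH p hp v W μp hμp μq hμq
end
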